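/- There is an absolute constant C such that for all s ∈ (0,1], all y ≥ 0 and all α > 0: |(1/α)∫_{−α}^{α} L_s(y+t) dt| ≤ C·s·y/(⟨y⟩ + ⟨α⟩), and |(1/α)∫_0^{α} ( L_s(y+t) − L_s(y−t) ) dt| ≤ C·s·[ 1_{{α ≤ y}}·α·ln(e+α)·⟨y⟩^{−2} + 1_{{y ≤ α}}·min{α, 1} ]. -/

import Mathlib

open MeasureTheory Real Set Filter

/-- Sliding average `⨍_α f(y) = (1/α) ∫_{y-α}^{y} f(z) dz`. -/
noncomputable def fint (α : ℝ) (f : ℝ → ℝ) (y : ℝ) : ℝ :=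
  (1 / α) * ∫ z in (y - α)..y, f z

/-- Finite difference slope `Δ_α f(y) = (f(y) - f(y-α))/α`. -/
noncomputable def slopeOp (α : ℝ) (f : ℝ → ℝ) (y : ℝ) : ℝ :=
  (f y - f (y - α)) / α

/-- The profile `L_s(y) = (2s/π) arctan((1+s²/3) y)`. -/
noncomputable def Ls (s y : ℝ) : ℝ := (2 * s / Real.pi) * Real.arctan ((1 + s ^ 2 / 3) * y)

/-- `δ_α[f,g](y) = ⨍_α f ⨍_α g - ⨍_{-α} f ⨍_{-α} g`. -/
noncomputable def deltaOp (α : ℝ) (f g : ℝ → ℝ) (y : ℝ) : ℝ :=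
  fint α f y * fint α g y - fint (-α) f y * fint (-α) g y

/-- `J_α[f,g](y) = ⨍_α f ⨍_α g - 2 f g + ⨍_{-α} f ⨍_{-α} g`. -/
noncomputable def Jop (α : ℝ) (f g : ℝ → ℝ) (y : ℝ) : ℝ :=
  fint α f y * fint α g y - 2 * f y * g y + fint (-α) f y * fint (-α) g y

/-- The `H¹` norm `(∫ g² + ∫ (g')²)^{1/2}`. -/
noncomputable def H1norm (g : ℝ → ℝ) : ℝ :=
  Real.sqrt ((∫ y : ℝ, g y ^ 2) + ∫ y : ℝ, deriv g y ^ 2)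

/-!
Since `L_s` is odd, `∫_{y-α}^{y+α} L_s = ∫_{|y-α|}^{y+α} L_s`: an integral over an interval of
length `2 min(α, y)` inside `[0, y + α]`, where `|L_s| ≤ s min(1, y + α)`. This gives the first
bound. For the second, `L_s` is `s`-Lipschitz and bounded by `s`, which settles `y ≤ α`. For
`α ≤ y` the subtraction formula for `arctan` gives `L_s(y+t) - L_s(y-t) ≤ 2st / (1 + y² - t²)`,
whose integral over `[0, α]` is `s log((1 + y²) / (1 + y² - α²)) = O(s α² log(e + α) / (1 + y²))`.
-/

namespace Real

theorem lipschitzWith_arctan : LipschitzWith 1 arctan :=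
  lipschitzWith_of_nnnorm_deriv_le differentiable_arctan fun x => by
    rw [deriv_arctan, ← NNReal.coe_le_coe, coe_nnnorm, NNReal.coe_one, Real.norm_eq_abs,
      abs_of_pos (by positivity)]
    exact div_le_one_of_le₀ (by nlinarith) (by positivity)

theorem abs_arctan_sub_arctan_le (u v : ℝ) : |arctan u - arctan v| ≤ |u - v| := by
  simpa [Real.dist_eq] using lipschitzWith_arctan.dist_le_mul u v

theorem arctan_sub_arctan {u v : ℝ} (h : -1 < u * v) :
    arctan u - arctan v = arctan ((u - v) / (1 + u * v)) := by
  rw [sub_eq_add_neg, ← arctan_neg, arctan_add (by linarith)]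
  ring_nf

theorem arctan_sub_arctan_le {u v : ℝ} (hvu : v ≤ u) (huv : -1 < u * v) :
    arctan u - arctan v ≤ (u - v) / (1 + u * v) := by
  have hz : 0 ≤ (u - v) / (1 + u * v) := div_nonneg (by linarith) (by linarith)
  have h := abs_arctan_sub_arctan_le ((u - v) / (1 + u * v)) 0
  rw [arctan_zero, sub_zero, sub_zero, abs_of_nonneg hz] at h
  rw [arctan_sub_arctan huv]
  exact (le_abs_self _).trans h

end Real

theorem Function.Odd.intervalIntegral_neg_eq_zero {E : Type*} [NormedAddCommGroup E]
    [NormedSpace ℝ E] {f : ℝ → E} (hf : f.Odd) (a : ℝ) : ∫ x in a..-a, f x = 0 := by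
  have h := intervalIntegral.integral_comp_neg (a := a) (b := -a) f
  simp only [hf.eq, intervalIntegral.integral_neg, neg_neg] at h
  have h2 : (2 : ℝ) • ∫ x in a..-a, f x = 0 := by
    rw [two_smul]
    nth_rewrite 1 [← h]
    exact neg_add_cancel _
  exact (smul_eq_zero.mp h2).resolve_left two_ne_zero

theorem sub_sq_pos_of_mem_uIcc {a α t : ℝ} (h : α ^ 2 < a) (ht : t ∈ uIcc 0 α) : 0 < a - t ^ 2 := by
  rcases mem_uIcc.mp ht with ⟨h0, h1⟩ | ⟨h0, h1⟩ <;> nlinarith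

theorem intervalIntegrable_two_mul_div_sub_sq {a α : ℝ} (h : α ^ 2 < a) :
    IntervalIntegrable (fun t => 2 * t / (a - t ^ 2)) volume 0 α :=
  ContinuousOn.intervalIntegrable (by
    refine ContinuousOn.div (by fun_prop) (by fun_prop) fun t ht => ?_
    exact (sub_sq_pos_of_mem_uIcc h ht).ne')

theorem integral_two_mul_div_sub_sq {a α : ℝ} (h : α ^ 2 < a) :
    ∫ t in (0:ℝ)..α, 2 * t / (a - t ^ 2) = log a - log (a - α ^ 2) := by
  have hderiv : ∀ t ∈ uIcc 0 α,
      HasDerivAt (fun t => -log (a - t ^ 2)) (2 * t / (a - t ^ 2)) t := by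
    intro t ht
    have hpos := sub_sq_pos_of_mem_uIcc h ht
    exact (((hasDerivAt_pow 2 t).const_sub a).log hpos.ne').neg.congr_deriv
      (by rw [neg_div, neg_neg]; norm_num)
  rw [intervalIntegral.integral_eq_sub_of_hasDerivAt hderiv
    (intervalIntegrable_two_mul_div_sub_sq h)]
  simp only [ne_eq, OfNat.ofNat_ne_zero, not_false_eq_true, zero_pow, sub_zero]
  ring

theorem min_one_mul_two_add_le {x : ℝ} (hx : 0 ≤ x) : min 1 x * (2 + x) ≤ 3 * x := by
  rcases le_total 1 x with h | h
  · rw [min_eq_left h]; linarith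
  · rw [min_eq_right h]; nlinarith

theorem min_mul_add_le {a b : ℝ} (ha : 0 ≤ a) (hb : 0 ≤ b) : min a b * (a + b) ≤ 2 * (a * b) := by
  rcases le_total a b with h | h
  · rw [min_eq_left h]; nlinarith
  · rw [min_eq_right h]; nlinarith

theorem sqrt_one_add_sq_le {x : ℝ} (hx : 0 ≤ x) : √(1 + x ^ 2) ≤ 1 + x :=
  (sqrt_le_left (by linarith)).mpr (by nlinarith)

theorem log_one_add_sq_sub_log_le {y α : ℝ} (hα : 0 < α) (hαy : α ≤ y) :
    log (1 + y ^ 2) - log (1 + y ^ 2 - α ^ 2) ≤ 6 * α ^ 2 * log (exp 1 + α) / (1 + y ^ 2) := by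
  have he : 2 < exp 1 := by linarith [exp_one_gt_d9]
  have hlog : 1 ≤ log (exp 1 + α) := by
    have h := log_le_log (exp_pos 1) (show exp 1 ≤ exp 1 + α by linarith)
    rwa [log_exp] at h
  have hb : 1 ≤ 1 + y ^ 2 - α ^ 2 := by nlinarith
  rw [le_div_iff₀ (by positivity)]
  rcases le_total (2 * α ^ 2) (1 + y ^ 2) with hsmall | hlarge
  · -- `log a - log b ≤ a / b - 1`, and here `b ≥ a / 2`
    have h := log_le_sub_one_of_pos (by positivity : 0 < (1 + y ^ 2) / (1 + y ^ 2 - α ^ 2))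
    rw [log_div (by positivity) (by positivity), div_sub_one (by positivity),
      show 1 + y ^ 2 - (1 + y ^ 2 - α ^ 2) = α ^ 2 by ring] at h
    calc (log (1 + y ^ 2) - log (1 + y ^ 2 - α ^ 2)) * (1 + y ^ 2)
        ≤ α ^ 2 / (1 + y ^ 2 - α ^ 2) * (1 + y ^ 2) := by gcongr
      _ ≤ 2 * α ^ 2 := by
          rw [div_mul_eq_mul_div, div_le_iff₀ (by linarith)]
          nlinarith [sq_nonneg α]
      _ ≤ 6 * α ^ 2 * log (exp 1 + α) := by nlinarith [sq_nonneg α]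
  · have hcube : 1 + y ^ 2 ≤ (exp 1 + α) ^ 3 := by
      have hsq : α ^ 2 ≤ (exp 1 + α) ^ 2 := by nlinarith
      nlinarith [mul_le_mul (show 2 ≤ exp 1 + α by linarith) hsq (sq_nonneg α) (by positivity)]
    have hloga : log (1 + y ^ 2) ≤ 3 * log (exp 1 + α) :=
      calc log (1 + y ^ 2) ≤ log ((exp 1 + α) ^ 3) := log_le_log (by positivity) hcube
        _ = 3 * log (exp 1 + α) := by rw [log_pow]; norm_num
    have hlogb : 0 ≤ log (1 + y ^ 2 - α ^ 2) := log_nonneg hb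
    calc (log (1 + y ^ 2) - log (1 + y ^ 2 - α ^ 2)) * (1 + y ^ 2)
        ≤ 3 * log (exp 1 + α) * (2 * α ^ 2) := by
          gcongr
          linarith
      _ = 6 * α ^ 2 * log (exp 1 + α) := by ring

section Ls

variable {s : ℝ}

theorem continuous_Ls (s : ℝ) : Continuous (Ls s) := by
  unfold Ls
  fun_prop

theorem Ls_odd (s : ℝ) : (Ls s).Odd := fun x => by
  simp only [Ls, mul_neg, arctan_neg]

theorem Ls_monotone (hs : 0 ≤ s) : Monotone (Ls s) := fun u v huv => by
  unfold Ls
  gcongr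

theorem abs_Ls_le (hs : 0 ≤ s) (x : ℝ) : |Ls s x| ≤ s := by
  have habs : |arctan ((1 + s ^ 2 / 3) * x)| ≤ π / 2 :=
    abs_le.mpr ⟨(neg_pi_div_two_lt_arctan _).le, (arctan_lt_pi_div_two _).le⟩
  calc |Ls s x| = 2 * s / π * |arctan ((1 + s ^ 2 / 3) * x)| := by
        rw [Ls, abs_mul, abs_of_nonneg (by positivity)]
    _ ≤ 2 * s / π * (π / 2) := by gcongr
    _ = s := by field_simp

-- `2s(1 + s²/3)/π` is the Lipschitz constant of `Ls s`
theorem two_mul_div_pi_mul_le (hs0 : 0 ≤ s) (hs1 : s ≤ 1) : 2 * s / π * (1 + s ^ 2 / 3) ≤ s := by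
  rw [div_mul_eq_mul_div, div_le_iff₀ pi_pos]
  nlinarith [pi_gt_three, mul_nonneg hs0 (sq_nonneg s)]

theorem abs_Ls_sub_Ls_le (hs0 : 0 ≤ s) (hs1 : s ≤ 1) (u v : ℝ) :
    |Ls s u - Ls s v| ≤ s * |u - v| := by
  set c := 1 + s ^ 2 / 3
  calc |Ls s u - Ls s v| = 2 * s / π * |arctan (c * u) - arctan (c * v)| := by
        rw [Ls, Ls, ← mul_sub, abs_mul, abs_of_nonneg (by positivity)]
    _ ≤ 2 * s / π * |c * u - c * v| :=
        mul_le_mul_of_nonneg_left (abs_arctan_sub_arctan_le _ _) (by positivity)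
    _ = 2 * s / π * c * |u - v| := by
        rw [← mul_sub, abs_mul, abs_of_pos (by positivity : 0 < c), mul_assoc]
    _ ≤ s * |u - v| := by gcongr; exact two_mul_div_pi_mul_le hs0 hs1

theorem Ls_sub_Ls_le (hs0 : 0 ≤ s) (hs1 : s ≤ 1) {u v : ℝ} (hvu : v ≤ u) (huv : 0 ≤ u * v) :
    Ls s u - Ls s v ≤ s * ((u - v) / (1 + u * v)) := by
  set c := 1 + s ^ 2 / 3
  have hc : 1 ≤ c := by simp only [c]; nlinarith [sq_nonneg s]
  calc Ls s u - Ls s v = 2 * s / π * (arctan (c * u) - arctan (c * v)) := by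
        rw [Ls, Ls, ← mul_sub]
    _ ≤ 2 * s / π * ((c * u - c * v) / (1 + c * u * (c * v))) := by
        gcongr
        exact arctan_sub_arctan_le (by gcongr) (by nlinarith [mul_nonneg (mul_nonneg
          (by positivity : (0:ℝ) ≤ c) (by positivity : (0:ℝ) ≤ c)) huv])
    _ ≤ 2 * s / π * (c * ((u - v) / (1 + u * v))) := by
        have hcc : u * v ≤ c * u * (c * v) := by
          nlinarith [mul_le_mul_of_nonneg_right (mul_le_mul hc hc zero_le_one (by positivity)) huv]
        have key : (c * u - c * v) / (1 + c * u * (c * v)) ≤ c * ((u - v) / (1 + u * v)) := by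
          rw [← mul_sub, mul_div_assoc]
          exact mul_le_mul_of_nonneg_left
            (div_le_div_of_nonneg_left (by linarith) (by linarith) (by linarith)) (by linarith)
        exact mul_le_mul_of_nonneg_left key (by positivity)
    _ = 2 * s / π * c * ((u - v) / (1 + u * v)) := by ring
    _ ≤ s * ((u - v) / (1 + u * v)) :=
        mul_le_mul_of_nonneg_right (two_mul_div_pi_mul_le hs0 hs1)
          (div_nonneg (by linarith) (by linarith))

theorem abs_integral_Ls_le (hs0 : 0 ≤ s) (hs1 : s ≤ 1) {a b : ℝ} (ha : 0 ≤ a) (hab : a ≤ b) :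
    |∫ x in a..b, Ls s x| ≤ (b - a) * (s * min 1 b) := by
  have hbound : ∀ x ∈ uIoc a b, ‖Ls s x‖ ≤ s * min 1 b := by
    intro x hx
    rw [uIoc_of_le hab] at hx
    have hLip := abs_Ls_sub_Ls_le hs0 hs1 x 0
    rw [(Ls_odd s).map_zero, sub_zero, sub_zero,
      abs_of_nonneg (show 0 ≤ x by linarith [hx.1])] at hLip
    rw [Real.norm_eq_abs, mul_min_of_nonneg _ _ hs0, mul_one]
    exact le_min (abs_Ls_le hs0 x) (hLip.trans (mul_le_mul_of_nonneg_left hx.2 hs0))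
  have h := intervalIntegral.norm_integral_le_of_norm_le_const hbound
  rwa [Real.norm_eq_abs, abs_of_nonneg (sub_nonneg.mpr hab), mul_comm] at h

theorem abs_integral_Ls_add_le (hs0 : 0 ≤ s) (hs1 : s ≤ 1) {y α : ℝ} (hy : 0 ≤ y) (hα : 0 ≤ α) :
    |∫ t in (-α)..α, Ls s (y + t)| ≤ 2 * min α y * (s * min 1 (y + α)) := by
  rw [intervalIntegral.integral_comp_add_left (Ls s), ← sub_eq_add_neg]
  rcases le_total α y with hαy | hyα
  · calc |∫ x in (y - α)..(y + α), Ls s x| ≤ (y + α - (y - α)) * (s * min 1 (y + α)) :=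
          abs_integral_Ls_le hs0 hs1 (by linarith) (by linarith)
      _ = 2 * min α y * (s * min 1 (y + α)) := by rw [min_eq_left hαy]; ring
  · have hint : ∀ a b : ℝ, IntervalIntegrable (Ls s) volume a b :=
      fun a b => (continuous_Ls s).intervalIntegrable a b
    -- on `[y - α, α - y]` the odd integrand cancels
    rw [← intervalIntegral.integral_add_adjacent_intervals (hint _ (-(y - α))) (hint _ _),
      (Ls_odd s).intervalIntegral_neg_eq_zero, zero_add, neg_sub]
    calc |∫ x in (α - y)..(y + α), Ls s x| ≤ (y + α - (α - y)) * (s * min 1 (y + α)) :=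
          abs_integral_Ls_le hs0 hs1 (by linarith) (by linarith)
      _ = 2 * min α y * (s * min 1 (y + α)) := by rw [min_eq_right hyα]; ring

theorem abs_integral_Ls_sub_le_min (hs0 : 0 ≤ s) (hs1 : s ≤ 1) {α : ℝ} (hα : 0 ≤ α) (y : ℝ) :
    |∫ t in (0:ℝ)..α, (Ls s (y + t) - Ls s (y - t))| ≤ 2 * s * min α 1 * α := by
  have hbound : ∀ t ∈ uIoc 0 α, ‖Ls s (y + t) - Ls s (y - t)‖ ≤ 2 * s * min α 1 := by
    intro t ht
    rw [uIoc_of_le hα] at ht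
    have hLip := abs_Ls_sub_Ls_le hs0 hs1 (y + t) (y - t)
    rw [show y + t - (y - t) = 2 * t by ring, abs_of_nonneg (by linarith [ht.1] : 0 ≤ 2 * t)]
      at hLip
    rw [Real.norm_eq_abs, mul_min_of_nonneg _ _ (by positivity), mul_one]
    refine le_min (hLip.trans (by nlinarith [mul_le_mul_of_nonneg_left ht.2 hs0])) ?_
    linarith [abs_sub (Ls s (y + t)) (Ls s (y - t)), abs_Ls_le hs0 (y + t), abs_Ls_le hs0 (y - t)]
  have h := intervalIntegral.norm_integral_le_of_norm_le_const hbound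
  rwa [Real.norm_eq_abs, sub_zero, abs_of_nonneg hα] at h

theorem abs_integral_Ls_sub_le_log (hs0 : 0 ≤ s) (hs1 : s ≤ 1) {y α : ℝ} (hα : 0 ≤ α)
    (hαy : α ≤ y) :
    |∫ t in (0:ℝ)..α, (Ls s (y + t) - Ls s (y - t))|
      ≤ s * (log (1 + y ^ 2) - log (1 + y ^ 2 - α ^ 2)) := by
  have hαy2 : α ^ 2 < 1 + y ^ 2 := by nlinarith
  have hcont : Continuous fun t => Ls s (y + t) - Ls s (y - t) := by
    have := continuous_Ls s
    fun_prop
  have hnonneg : 0 ≤ ∫ t in (0:ℝ)..α, (Ls s (y + t) - Ls s (y - t)) :=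
    intervalIntegral.integral_nonneg hα fun t ht =>
      sub_nonneg.mpr (Ls_monotone hs0 (by linarith [ht.1]))
  have hpoint : ∀ t ∈ Icc 0 α,
      Ls s (y + t) - Ls s (y - t) ≤ s * (2 * t / (1 + y ^ 2 - t ^ 2)) := by
    intro t ht
    have h := Ls_sub_Ls_le hs0 hs1 (by linarith [ht.1] : y - t ≤ y + t)
      (by nlinarith [ht.1, ht.2])
    convert h using 3 <;> ring
  rw [abs_of_nonneg hnonneg, ← integral_two_mul_div_sub_sq hαy2,
    ← intervalIntegral.integral_const_mul]
  exact intervalIntegral.integral_mono_on hα (hcont.intervalIntegrable _ _)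
    ((intervalIntegrable_two_mul_div_sub_sq hαy2).const_mul s) hpoint

end Ls

theorem abs_average_Ls_le {s y α : ℝ} (hs0 : 0 ≤ s) (hs1 : s ≤ 1) (hy : 0 ≤ y) (hα : 0 < α) :
    |(1 / α) * ∫ t in (-α)..α, Ls s (y + t)| ≤ 12 * s * y / (√(1 + y ^ 2) + √(1 + α ^ 2)) := by
  have hD : 0 < √(1 + y ^ 2) + √(1 + α ^ 2) := by positivity
  have hDle : √(1 + y ^ 2) + √(1 + α ^ 2) ≤ 2 + (y + α) := by
    linarith [sqrt_one_add_sq_le hy, sqrt_one_add_sq_le hα.le]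
  rw [le_div_iff₀ hD, abs_mul, abs_of_pos (one_div_pos.mpr hα)]
  calc 1 / α * |∫ t in (-α)..α, Ls s (y + t)| * (√(1 + y ^ 2) + √(1 + α ^ 2))
      ≤ 1 / α * (2 * min α y * (s * min 1 (y + α))) * (2 + (y + α)) := by
        gcongr
        exact abs_integral_Ls_add_le hs0 hs1 hy hα.le
    _ = 2 * s / α * (min α y * (min 1 (y + α) * (2 + (y + α)))) := by ring
    _ ≤ 2 * s / α * (min α y * (3 * (α + y))) := by
        rw [add_comm α]
        gcongr ?_ * (_ * ?_)
        exact min_one_mul_two_add_le (by linarith)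
    _ = 6 * s / α * (min α y * (α + y)) := by ring
    _ ≤ 6 * s / α * (2 * (α * y)) := by gcongr ?_ * ?_; exact min_mul_add_le hα.le hy
    _ = 12 * s * y := by field_simp; ring

theorem abs_average_Ls_sub_le {s y α : ℝ} (hs0 : 0 ≤ s) (hs1 : s ≤ 1) (hα : 0 < α) :
    |(1 / α) * ∫ t in (0:ℝ)..α, (Ls s (y + t) - Ls s (y - t))|
      ≤ 12 * s * ((if α ≤ y then α * log (exp 1 + α) * (1 + y ^ 2)⁻¹ else 0)
        + (if y ≤ α then min α 1 else 0)) := by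
  have hlog : 0 ≤ log (exp 1 + α) := log_nonneg (by linarith [add_one_le_exp (1 : ℝ)])
  rw [abs_mul, abs_of_pos (one_div_pos.mpr hα)]
  rcases le_total α y with hαy | hyα
  · have hrest : 0 ≤ if y ≤ α then min α 1 else 0 := by
      split_ifs <;> positivity
    rw [if_pos hαy]
    calc 1 / α * |∫ t in (0:ℝ)..α, (Ls s (y + t) - Ls s (y - t))|
        ≤ 1 / α * (s * (6 * α ^ 2 * log (exp 1 + α) / (1 + y ^ 2))) := by
          gcongr
          exact (abs_integral_Ls_sub_le_log hs0 hs1 hα.le hαy).trans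
            (mul_le_mul_of_nonneg_left (log_one_add_sq_sub_log_le hα hαy) hs0)
      _ = 6 * s * (α * log (exp 1 + α) * (1 + y ^ 2)⁻¹) := by field_simp
      _ ≤ 12 * s * (α * log (exp 1 + α) * (1 + y ^ 2)⁻¹ + if y ≤ α then min α 1 else 0) := by
          have : 0 ≤ s * (α * log (exp 1 + α) * (1 + y ^ 2)⁻¹) := by positivity
          nlinarith [mul_nonneg hs0 hrest]
  · have hrest : 0 ≤ if α ≤ y then α * log (exp 1 + α) * (1 + y ^ 2)⁻¹ else 0 := by
      split_ifs <;> positivity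
    rw [if_pos hyα]
    calc 1 / α * |∫ t in (0:ℝ)..α, (Ls s (y + t) - Ls s (y - t))|
        ≤ 1 / α * (2 * s * min α 1 * α) := by
          gcongr
          exact abs_integral_Ls_sub_le_min hs0 hs1 hα.le y
      _ = 2 * s * min α 1 := by field_simp
      _ ≤ 12 * s * ((if α ≤ y then α * log (exp 1 + α) * (1 + y ^ 2)⁻¹ else 0) + min α 1) := by
          have : 0 ≤ s * min α 1 := mul_nonneg hs0 (le_min hα.le zero_le_one)
          nlinarith [mul_nonneg hs0 hrest]

/-- Bounds on symmetric averages of the profile `L_s`. -/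
theorem Ls_average_bounds :
    ∃ C : ℝ, 0 < C ∧ ∀ s : ℝ, 0 < s → s ≤ 1 → ∀ y : ℝ, 0 ≤ y → ∀ α : ℝ, 0 < α →
      (|(1 / α) * ∫ t in (-α)..α, Ls s (y + t)|
          ≤ C * s * y / (Real.sqrt (1 + y ^ 2) + Real.sqrt (1 + α ^ 2))) ∧
      (|(1 / α) * ∫ t in (0:ℝ)..α, (Ls s (y + t) - Ls s (y - t))|
          ≤ C * s * ((if α ≤ y then α * Real.log (Real.exp 1 + α) * (1 + y ^ 2)⁻¹ else 0)
            + (if y ≤ α then min α 1 else 0))) :=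
  ⟨12, by norm_num, fun _ hs hs1 _ hy _ hα =>
    ⟨abs_average_Ls_le hs.le hs1 hy hα, abs_average_Ls_sub_le hs.le hs1 hα⟩⟩
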